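/- arXiv:2209.07490 — 6 statements merged into one kernel-verified Lean document; each statement's English description precedes it below -/
import Mathlib

section
/- Affine Gaussian swap identity (density form, general case of the swap algorithm): let μ₀, b be reals, v₀, v positive reals, and a a nonzero real. Set μ₀' := a*μ₀ + b, v₀' := a^2 * v₀, w := (1/v₀' + 1/v)⁻¹, and for y : ℝ set m(y) := (μ₀'/v₀' + y/v) * w. Then for all real x, y: φ(μ₀, v₀; x) * φ(a*x + b, v; y) = φ(μ₀', v₀' + v; y) * φ((m(y) - b)/a, w/a^2; x). -/
/-- The Gaussian probability density with mean `μ` and (positive real) variance `v`. -/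
noncomputable def gaussPDF (μ v x : ℝ) : ℝ :=
  (Real.sqrt (2 * Real.pi * v))⁻¹ * Real.exp (-(x - μ) ^ 2 / (2 * v))

/-!
Substituting `z = a * x + b` turns the prior density into `|a|` times the density of
`N(μ₀', v₀')` at `z`, and the likelihood, read as a function of its mean, into the density
of `N(y, v)` at `z`. The product of two Gaussian densities in the same variable is, by
completing the square, the density of the difference of their means times a Gaussian in
`z` with precision-weighted mean and harmonic variance; undoing the substitution gives the
posterior in `x`.
-/

open Real

theorem gaussPDF_comm (μ v x : ℝ) : gaussPDF μ v x = gaussPDF x v μ := by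
  rw [gaussPDF, gaussPDF, ← neg_sub, neg_sq]

theorem gaussPDF_eq_abs_mul_gaussPDF_affine {a : ℝ} (ha : a ≠ 0) (b μ v x : ℝ) :
    gaussPDF μ v x = |a| * gaussPDF (a * μ + b) (a ^ 2 * v) (a * x + b) := by
  have hexp : (a * x + b - (a * μ + b)) ^ 2 / (2 * (a ^ 2 * v)) = (x - μ) ^ 2 / (2 * v) := by
    field_simp
    ring
  have hsqrt : √(2 * π * (a ^ 2 * v)) = |a| * √(2 * π * v) := by
    rw [mul_left_comm, sqrt_mul (sq_nonneg a), sqrt_sq_eq_abs]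
  rw [gaussPDF, gaussPDF, neg_div, neg_div, hexp, hsqrt, mul_inv, ← mul_assoc, ← mul_assoc,
    mul_inv_cancel₀ (abs_ne_zero.mpr ha), one_mul]

theorem gaussPDF_mul_gaussPDF {v₁ v₂ : ℝ} (hv₁ : 0 < v₁) (hv₂ : 0 < v₂) (μ₁ μ₂ x : ℝ) :
    gaussPDF μ₁ v₁ x * gaussPDF μ₂ v₂ x =
      gaussPDF μ₁ (v₁ + v₂) μ₂ *
        gaussPDF ((μ₁ / v₁ + μ₂ / v₂) * (1 / v₁ + 1 / v₂)⁻¹) (1 / v₁ + 1 / v₂)⁻¹ x := by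
  have hw : (1 / v₁ + 1 / v₂)⁻¹ = v₁ * v₂ / (v₁ + v₂) := by
    field_simp
    ring
  have hnorm : 2 * π * v₁ * (2 * π * v₂) =
      2 * π * (v₁ + v₂) * (2 * π * (1 / v₁ + 1 / v₂)⁻¹) := by
    rw [hw]
    field_simp
  -- completing the square in `x`
  have hexp : -(x - μ₁) ^ 2 / (2 * v₁) + -(x - μ₂) ^ 2 / (2 * v₂) =
      -(μ₂ - μ₁) ^ 2 / (2 * (v₁ + v₂)) +
        -(x - (μ₁ / v₁ + μ₂ / v₂) * (1 / v₁ + 1 / v₂)⁻¹) ^ 2 / (2 * (1 / v₁ + 1 / v₂)⁻¹) := by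
    rw [hw]
    field_simp
    ring
  simp only [gaussPDF]
  rw [mul_mul_mul_comm, ← mul_inv, ← sqrt_mul (by positivity), ← exp_add, hnorm, hexp,
    sqrt_mul (by positivity), mul_inv, exp_add]
  ring

/-- Affine Gaussian swap identity (density form, general case of the swap algorithm):
with `μ₀' = a*μ₀ + b`, `v₀' = a^2 * v₀`, `w = (1/v₀' + 1/v)⁻¹` and
`m y = (μ₀'/v₀' + y/v) * w`, a prior `X₁ ~ N(μ₀, v₀)` with likelihood
`X₂ | X₁ = x ~ N(a*x + b, v)` re-factorizes as `X₂ ~ N(μ₀', v₀' + v)` with posterior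
`X₁ | X₂ = y ~ N((m y - b)/a, w/a^2)`. -/
theorem affine_gaussian_swap (μ₀ b : ℝ) (v₀ v : ℝ) (hv₀ : 0 < v₀) (hv : 0 < v)
    (a : ℝ) (ha : a ≠ 0) (x y : ℝ) :
    gaussPDF μ₀ v₀ x * gaussPDF (a * x + b) v y =
      gaussPDF (a * μ₀ + b) (a ^ 2 * v₀ + v) y *
        gaussPDF
          ((((a * μ₀ + b) / (a ^ 2 * v₀) + y / v) * (1 / (a ^ 2 * v₀) + 1 / v)⁻¹ - b) / a)
          ((1 / (a ^ 2 * v₀) + 1 / v)⁻¹ / a ^ 2) x := by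
  set w := (1 / (a ^ 2 * v₀) + 1 / v)⁻¹
  set m := ((a * μ₀ + b) / (a ^ 2 * v₀) + y / v) * w
  have hmean : a * ((m - b) / a) + b = m := by field_simp; ring
  have hvar : a ^ 2 * (w / a ^ 2) = w := mul_div_cancel₀ w (pow_ne_zero 2 ha)
  rw [gaussPDF_eq_abs_mul_gaussPDF_affine ha b μ₀, gaussPDF_comm (a * x + b),
    gaussPDF_eq_abs_mul_gaussPDF_affine ha b ((m - b) / a), hmean, hvar, mul_assoc,
    gaussPDF_mul_gaussPDF (by positivity) hv]
  ring
end

section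
/- Marginal of a linear-Gaussian model (measure form): for every real μ₀, a, b and all nonnegative-real variances v₀, v, the Measure.bind of the Gaussian measure gaussianReal μ₀ v₀ with the kernel x ↦ gaussianReal (a*x + b) v equals gaussianReal (a*μ₀ + b) (a^2 * v₀ + v). That is, (gaussianReal μ₀ v₀).bind (fun x => gaussianReal (a*x + b) v) = gaussianReal (a*μ₀ + b) (a^2 * v₀ + v). -/
open MeasureTheory ProbabilityTheory
open scoped NNReal

/-!
Conditionally on `x`, the child is `a * x + b` plus independent `N(0, v)` noise, so binding with
the kernel is the convolution of the law of `a * x + b`, namely `N(a * μ₀ + b, a² v₀)`, with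
`N(0, v)`; Gaussians are closed under convolution, with means and variances adding.
-/

namespace MeasureTheory.Measure

variable {α M : Type*} [MeasurableSpace α] [AddMonoid M] [MeasurableSpace M] [MeasurableAdd₂ M]

lemma measurable_map_const_add (ν : Measure M) [SFinite ν] {f : α → M} (hf : Measurable f) :
    Measurable fun x => ν.map (f x + ·) := by
  refine measurable_of_measurable_coe _ fun s hs => ?_
  simp_rw [map_apply (measurable_const_add _) hs]
  exact (measurable_measure_prodMk_left (measurable_add hs)).comp hf

lemma bind_map_const_add_eq_map_conv (ρ : Measure α) (ν : Measure M) [SFinite ν] {f : α → M}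
    (hf : Measurable f) :
    ρ.bind (fun x => ν.map (f x + ·)) = ρ.map f ∗ ν := by
  ext s hs
  rw [bind_apply hs (measurable_map_const_add ν hf).aemeasurable, conv,
    map_apply measurable_add hs, prod_apply (measurable_add hs),
    lintegral_map (measurable_measure_prodMk_left (measurable_add hs)) hf]
  simp_rw [map_apply (measurable_const_add _) hs]
  rfl

end MeasureTheory.Measure

namespace ProbabilityTheory

lemma gaussianReal_map_affine (μ a b : ℝ) (v : ℝ≥0) :
    (gaussianReal μ v).map (fun x => a * x + b) =
      gaussianReal (a * μ + b) (.mk (a ^ 2) (sq_nonneg a) * v) := by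
  rw [← gaussianReal_map_add_const, ← gaussianReal_map_const_mul,
    Measure.map_map (measurable_add_const b) (measurable_const_mul a)]
  rfl

lemma gaussianReal_eq_map_const_add (μ : ℝ) (v : ℝ≥0) :
    gaussianReal μ v = (gaussianReal 0 v).map (μ + ·) := by
  rw [gaussianReal_map_const_add, zero_add]

end ProbabilityTheory

/-- Marginal of a linear-Gaussian model (measure form): binding the Gaussian measure
`N(μ₀, v₀)` with the kernel `x ↦ N(a*x + b, v)` yields `N(a*μ₀ + b, a^2*v₀ + v)`. -/
theorem gaussian_linear_marginal (μ₀ a b : ℝ) (v₀ v : ℝ≥0) :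
    (gaussianReal μ₀ v₀).bind (fun x => gaussianReal (a * x + b) v) =
      gaussianReal (a * μ₀ + b) ((a ^ 2).toNNReal * v₀ + v) := by
  simp_rw [gaussianReal_eq_map_const_add (a * _ + b) v]
  rw [Measure.bind_map_const_add_eq_map_conv _ _ (by fun_prop), gaussianReal_map_affine,
    gaussianReal_conv_gaussianReal, add_zero, Real.toNNReal_of_nonneg (sq_nonneg a)]
end

section
/- Gaussian swap preserves the joint distribution (measure form): let μ₀, b be reals, v₀, v positive reals, and a a nonzero real. Set w := (1/(a^2*v₀) + 1/v)⁻¹ and, for y : ℝ, m(y) := ((a*μ₀ + b)/(a^2*v₀) + y/v) * w. Then the joint measure on ℝ × ℝ obtained by first sampling x from N(μ₀, v₀) and then y from N(a*x + b, v) equals the joint measure obtained by first sampling y from N(a*μ₀ + b, a^2*v₀ + v) and then x from N((m(y) - b)/a, w/a^2): (gaussianReal μ₀ v₀).bind (fun x => Measure.map (fun y => (x, y)) (gaussianReal (a*x + b) v)) = (gaussianReal (a*μ₀ + b) (a^2*v₀ + v)).bind (fun y => Measure.map (fun x => (x, y)) (gaussianReal ((m(y) - b)/a) (w/a^2))). 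-/
/-!
Both joint measures have a density with respect to Lebesgue measure on `ℝ × ℝ`: the prior
density of `x` times the likelihood of `y` given `x`, respectively the marginal density of `y`
times the posterior density of `x` given `y`. These two products agree pointwise, which is Bayes'
rule for Gaussians: completing the square in `x` in the sum of the two exponents.
-/

open MeasureTheory ProbabilityTheory
open scoped NNReal ENNReal

namespace MeasureTheory.Measure

variable {α β : Type*} [MeasurableSpace α] [MeasurableSpace β] {μ : Measure α} {ν : Measure β}

lemma map_prodMk_withDensity_apply (g : α → β → ℝ≥0∞) (x : α) {s : Set (α × β)}
    (hs : MeasurableSet s) :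
    (ν.withDensity (g x)).map (Prod.mk x) s =
      ∫⁻ y, s.indicator (Function.uncurry g) (x, y) ∂ν := by
  rw [map_apply measurable_prodMk_left hs, withDensity_apply _ (measurable_prodMk_left hs),
    ← lintegral_indicator (measurable_prodMk_left hs)]
  rfl

variable [SFinite ν]

lemma measurable_map_prodMk_withDensity {g : α → β → ℝ≥0∞}
    (hg : Measurable (Function.uncurry g)) :
    Measurable fun x => (ν.withDensity (g x)).map (Prod.mk x) :=
  measurable_of_measurable_coe _ fun s hs => by
    simp_rw [map_prodMk_withDensity_apply g _ hs]
    exact (hg.indicator hs).lintegral_prod_right'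

lemma bind_map_prodMk_withDensity {f : α → ℝ≥0∞} {g : α → β → ℝ≥0∞} (hf : Measurable f)
    (hg : Measurable (Function.uncurry g)) :
    (μ.withDensity f).bind (fun x => (ν.withDensity (g x)).map (Prod.mk x)) =
      (μ.prod ν).withDensity (fun p => f p.1 * g p.1 p.2) := by
  ext s hs
  have hF : Measurable fun p : α × β => f p.1 * g p.1 p.2 := (hf.comp measurable_fst).mul hg
  rw [bind_apply hs (measurable_map_prodMk_withDensity hg).aemeasurable]
  simp_rw [map_prodMk_withDensity_apply g _ hs]
  rw [lintegral_withDensity_eq_lintegral_mul _ hf (hg.indicator hs).lintegral_prod_right',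
    withDensity_apply _ hs, ← lintegral_indicator hs,
    lintegral_prod _ (hF.indicator hs).aemeasurable]
  refine lintegral_congr fun x => ?_
  simp_rw [Set.indicator_mul_right]
  exact (lintegral_const_mul _ ((hg.indicator hs).comp measurable_prodMk_left)).symm

lemma map_bind {γ : Type*} [MeasurableSpace γ] {κ : α → Measure β} (hκ : Measurable κ)
    {h : β → γ} (hh : Measurable h) :
    (μ.bind κ).map h = μ.bind fun x => (κ x).map h := by
  have hκh : Measurable fun x => (κ x).map h := (measurable_map h hh).comp hκ
  ext s hs
  rw [map_apply hh hs, bind_apply (hh hs) hκ.aemeasurable, bind_apply hs hκh.aemeasurable]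
  simp_rw [map_apply hh hs]

lemma map_swap_withDensity [SFinite μ] {F : α × β → ℝ≥0∞} (hF : Measurable F) :
    ((μ.prod ν).withDensity F).map Prod.swap = (ν.prod μ).withDensity (F ∘ Prod.swap) := by
  ext s hs
  rw [map_apply measurable_swap hs, withDensity_apply _ (measurable_swap hs),
    withDensity_apply _ hs, ← prod_swap (μ := μ) (ν := ν),
    setLIntegral_map hs (hF.comp measurable_swap) measurable_swap]
  simp

lemma bind_map_prodMk_swap_withDensity [SFinite μ] {f : α → ℝ≥0∞} {g : α → β → ℝ≥0∞}
    (hf : Measurable f) (hg : Measurable (Function.uncurry g)) :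
    (μ.withDensity f).bind (fun y => (ν.withDensity (g y)).map fun x => (x, y)) =
      (ν.prod μ).withDensity (fun p => f p.2 * g p.2 p.1) := by
  have hF : Measurable fun p : α × β => f p.1 * g p.1 p.2 := (hf.comp measurable_fst).mul hg
  calc _ = ((μ.withDensity f).bind fun y => (ν.withDensity (g y)).map (Prod.mk y)).map
          Prod.swap := by
        rw [map_bind (measurable_map_prodMk_withDensity hg) measurable_swap]
        simp_rw [map_map measurable_swap measurable_prodMk_left]
        rfl
    _ = _ := by rw [bind_map_prodMk_withDensity hf hg, map_swap_withDensity hF]; rfl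

end MeasureTheory.Measure

namespace ProbabilityTheory

lemma _root_.Measurable.gaussianPDF {α : Type*} [MeasurableSpace α] {m x : α → ℝ}
    (hm : Measurable m) (hx : Measurable x) (v : ℝ≥0) :
    Measurable fun p => gaussianPDF (m p) v (x p) := by
  unfold ProbabilityTheory.gaussianPDF gaussianPDFReal
  fun_prop

lemma gaussianPDFReal_mul_gaussianPDFReal_swap (μ₀ b : ℝ) {v₀ v : ℝ≥0} (hv₀ : 0 < v₀)
    (hv : 0 < v) {a : ℝ} (ha : a ≠ 0) (x y : ℝ) :
    gaussianPDFReal μ₀ v₀ x * gaussianPDFReal (a * x + b) v y =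
      gaussianPDFReal (a * μ₀ + b) ((a ^ 2).toNNReal * v₀ + v) y *
        gaussianPDFReal
          ((((a * μ₀ + b) / (a ^ 2 * (v₀ : ℝ)) + y / (v : ℝ)) *
              (1 / (a ^ 2 * (v₀ : ℝ)) + 1 / (v : ℝ))⁻¹ - b) / a)
          (((1 / (a ^ 2 * (v₀ : ℝ)) + 1 / (v : ℝ))⁻¹ / a ^ 2).toNNReal) x := by
  have hv₀' : (0 : ℝ) < v₀ := hv₀
  have hv' : (0 : ℝ) < v := hv
  simp only [gaussianPDFReal, NNReal.coe_add, NNReal.coe_mul, Real.coe_toNNReal _ (sq_nonneg a),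
    Real.coe_toNNReal _ (by positivity : 0 ≤ (1 / (a ^ 2 * (v₀ : ℝ)) + 1 / (v : ℝ))⁻¹ / a ^ 2)]
  rw [mul_mul_mul_comm, ← Real.exp_add, mul_mul_mul_comm, ← Real.exp_add,
    ← mul_inv, ← mul_inv, ← Real.sqrt_mul (by positivity), ← Real.sqrt_mul (by positivity)]
  have hd : 1 / (a ^ 2 * (v₀ : ℝ)) + 1 / (v : ℝ) ≠ 0 := by positivity
  congr 1
  · congr 2
    -- `v₀ v = (a² v₀ + v) (w / a²)` since `w = a² v₀ v / (a² v₀ + v)`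
    field_simp
    ring
  · congr 1
    field_simp
    ring

end ProbabilityTheory

/-- Gaussian swap preserves the joint distribution (measure form): with
`w = (1/(a^2*v₀) + 1/v)⁻¹` and `m y = ((a*μ₀ + b)/(a^2*v₀) + y/v) * w`, the joint measure
on `ℝ × ℝ` obtained by sampling `x` from `N(μ₀, v₀)` and then `y` from `N(a*x + b, v)`
equals the one obtained by sampling `y` from `N(a*μ₀ + b, a^2*v₀ + v)` and then `x` from
`N((m y - b)/a, w/a^2)`. -/
theorem gaussian_swap_joint (μ₀ b : ℝ) (v₀ v : ℝ≥0) (hv₀ : 0 < v₀) (hv : 0 < v)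
    (a : ℝ) (ha : a ≠ 0) :
    (gaussianReal μ₀ v₀).bind
        (fun x => Measure.map (fun y => (x, y)) (gaussianReal (a * x + b) v)) =
      (gaussianReal (a * μ₀ + b) ((a ^ 2).toNNReal * v₀ + v)).bind
        (fun y => Measure.map (fun x => (x, y))
          (gaussianReal
            ((((a * μ₀ + b) / (a ^ 2 * (v₀ : ℝ)) + y / (v : ℝ)) *
                (1 / (a ^ 2 * (v₀ : ℝ)) + 1 / (v : ℝ))⁻¹ - b) / a)
            (((1 / (a ^ 2 * (v₀ : ℝ)) + 1 / (v : ℝ))⁻¹ / a ^ 2).toNNReal))) := by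
  have hv_marg : (a ^ 2).toNNReal * v₀ + v ≠ 0 := (add_pos_of_nonneg_of_pos zero_le hv).ne'
  have hv_post : ((1 / (a ^ 2 * (v₀ : ℝ)) + 1 / (v : ℝ))⁻¹ / a ^ 2).toNNReal ≠ 0 := by
    have hv₀' : (0 : ℝ) < v₀ := hv₀
    have hv' : (0 : ℝ) < v := hv
    rw [ne_eq, Real.toNNReal_eq_zero, not_le]
    positivity
  simp only [gaussianReal_of_var_ne_zero _ hv₀.ne', gaussianReal_of_var_ne_zero _ hv.ne',
    gaussianReal_of_var_ne_zero _ hv_marg, gaussianReal_of_var_ne_zero _ hv_post]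
  rw [Measure.bind_map_prodMk_withDensity (measurable_gaussianPDF _ _)
      (Measurable.gaussianPDF (by fun_prop) measurable_snd _),
    Measure.bind_map_prodMk_swap_withDensity (measurable_gaussianPDF _ _)
      (Measurable.gaussianPDF (by fun_prop) measurable_snd _)]
  congr 1 with ⟨x, y⟩
  simp only [gaussianPDF, ← ENNReal.ofReal_mul (gaussianPDFReal_nonneg _ _ _)]
  rw [gaussianPDFReal_mul_gaussianPDFReal_swap μ₀ b hv₀ hv ha]
end

section
/- Bernoulli–Bernoulli swap preserves the joint distribution (PMF form): let p₁, q₀, q₁ : ℝ≥0∞ with p₁ ≤ 1, q₀ ≤ 1, q₁ ≤ 1, and set p₂' := p₁*q₁ + (1 - p₁)*q₀. Assume p₂' ≠ 0 and p₂' ≠ 1. Define p₁'(true) := p₁*q₁ / p₂' and p₁'(false) := p₁*(1 - q₁) / (1 - p₂'); then p₁'(t) ≤ 1 for each t : Bool, and the joint PMF on Bool × Bool factorized parent-first equals the joint PMF factorized child-first: (PMF.bernoulli p₁).bind (fun t₁ => ((PMF.bernoulli (if t₁ then q₁ else q₀)).map (fun t₂ => (t₁, t₂)))) = (PMF.bernoulli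 p₂').bind (fun t₂ => ((PMF.bernoulli (p₁' t₂)).map (fun t₁ => (t₁, t₂)))). -/
open scoped ENNReal

/-- A `PMF` which assigns probability `p` to `true` and `1 - p` to `false`. -/
noncomputable def PMF.bernoulliENNReal (p : ℝ≥0∞) (h : p ≤ 1) : PMF Bool :=
  PMF.ofFintype (fun b => cond b p (1 - p)) (by simp [h])

/-- The marginal probability `p₂' = p₁*q₁ + (1 - p₁)*q₀` of the child variable is at
most `1`. -/
theorem bernoulli_p2'_le_one (p₁ q₀ q₁ : ℝ≥0∞)
    (hp₁ : p₁ ≤ 1) (hq₀ : q₀ ≤ 1) (hq₁ : q₁ ≤ 1) :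
    p₁ * q₁ + (1 - p₁) * q₀ ≤ 1 :=
  calc p₁ * q₁ + (1 - p₁) * q₀ ≤ p₁ * 1 + (1 - p₁) * 1 :=
        add_le_add (by gcongr) (by gcongr)
    _ = p₁ + (1 - p₁) := by rw [mul_one, mul_one]
    _ = 1 := add_tsub_cancel_of_le hp₁

/-!
Both joints give `(t₁, t₂)` the mass "marginal × conditional". Write the parent-first masses as
`a = p₁q₁`, `b = (1 - p₁)q₀` (child `true`) and `c = p₁(1 - q₁)`, `d = (1 - p₁)(1 - q₀)`
(child `false`), so that `a + b = p₂'` and `c + d = 1 - p₂'`. The child-first masses are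
`p₂' · (a / p₂')`, `p₂' · (1 - a / p₂')`, and likewise with `1 - p₂'`, `c`; since `p₂'` and
`1 - p₂'` are nonzero and finite, these cancel to `a, b, c, d`.
-/

namespace PMF

variable {α β : Type*}

theorem bind_map_pair_right_apply (μ : PMF α) (κ : α → PMF β) (a : α) (b : β) :
    (μ.bind fun a' => (κ a').map fun b' => (a', b')) (a, b) = μ a * κ a b := by
  rw [bind_apply, tsum_eq_single a]
  · rw [map_apply, tsum_eq_single b]
    · simp
    · intro b' hb'
      simp [Ne.symm hb']
  · intro a' ha'
    simp [map_apply, Ne.symm ha']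

theorem bind_map_pair_left_apply (μ : PMF β) (κ : β → PMF α) (a : α) (b : β) :
    (μ.bind fun b' => (κ b').map fun a' => (a', b')) (a, b) = μ b * κ b a := by
  rw [bind_apply, tsum_eq_single b]
  · rw [map_apply, tsum_eq_single a]
    · simp
    · intro a' ha'
      simp [Ne.symm ha']
  · intro b' hb'
    simp [map_apply, Ne.symm hb']

@[simp]
theorem bernoulliENNReal_apply_true (p : ℝ≥0∞) (h : p ≤ 1) : bernoulliENNReal p h true = p := rfl

@[simp]
theorem bernoulliENNReal_apply_false (p : ℝ≥0∞) (h : p ≤ 1) :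
    bernoulliENNReal p h false = 1 - p := rfl

end PMF

namespace ENNReal

theorem mul_one_sub_div_of_add_eq {a b s : ℝ≥0∞} (hab : a + b = s) (hs0 : s ≠ 0) (hs : s ≠ ∞) :
    s * (1 - a / s) = b := by
  have ha : a ≠ ∞ := ne_top_of_le_ne_top hs (hab ▸ le_self_add)
  rw [ENNReal.mul_sub fun _ _ => hs, mul_one, ENNReal.mul_div_cancel hs0 hs, ← hab,
    ENNReal.add_sub_cancel_left ha]

theorem one_sub_mul_add_mul {p q₀ q₁ : ℝ≥0∞} (hp : p ≤ 1) (hq₀ : q₀ ≤ 1) (hq₁ : q₁ ≤ 1) :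
    1 - (p * q₁ + (1 - p) * q₀) = p * (1 - q₁) + (1 - p) * (1 - q₀) := by
  have split (r q : ℝ≥0∞) (hq : q ≤ 1) : r * q + r * (1 - q) = r := by
    rw [← mul_add, add_tsub_cancel_of_le hq, mul_one]
  refine ENNReal.sub_eq_of_eq_add ?_ ?_
  · exact ne_top_of_le_ne_top one_ne_top (bernoulli_p2'_le_one p q₀ q₁ hp hq₀ hq₁)
  · calc (1 : ℝ≥0∞) = p + (1 - p) := (add_tsub_cancel_of_le hp).symm
      _ = (p * q₁ + p * (1 - q₁)) + ((1 - p) * q₀ + (1 - p) * (1 - q₀)) := by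
        rw [split p q₁ hq₁, split (1 - p) q₀ hq₀]
      _ = _ := by ring

end ENNReal

/-- Bernoulli–Bernoulli swap preserves the joint distribution (PMF form): with
`p₂' = p₁*q₁ + (1 - p₁)*q₀` (assumed `≠ 0` and `≠ 1`), and
`p₁' true = p₁*q₁ / p₂'`, `p₁' false = p₁*(1 - q₁) / (1 - p₂')`, each `p₁' t ≤ 1`
and the joint PMF on `Bool × Bool` factorized parent-first equals the joint PMF
factorized child-first. -/
theorem bernoulli_bernoulli_swap_joint (p₁ q₀ q₁ : ℝ≥0∞)
    (hp₁ : p₁ ≤ 1) (hq₀ : q₀ ≤ 1) (hq₁ : q₁ ≤ 1)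
    (h0 : p₁ * q₁ + (1 - p₁) * q₀ ≠ 0) (h1 : p₁ * q₁ + (1 - p₁) * q₀ ≠ 1) :
    ∃ h : ∀ t₂ : Bool,
        (if t₂ then p₁ * q₁ / (p₁ * q₁ + (1 - p₁) * q₀)
          else p₁ * (1 - q₁) / (1 - (p₁ * q₁ + (1 - p₁) * q₀))) ≤ 1,
      (PMF.bernoulliENNReal p₁ hp₁).bind
          (fun t₁ =>
            (PMF.bernoulliENNReal (if t₁ then q₁ else q₀) (by cases t₁ <;> simp_all)).map
              (fun t₂ => (t₁, t₂))) =
        (PMF.bernoulliENNReal (p₁ * q₁ + (1 - p₁) * q₀)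
            (bernoulli_p2'_le_one p₁ q₀ q₁ hp₁ hq₀ hq₁)).bind
          (fun t₂ =>
            (PMF.bernoulliENNReal
                (if t₂ then p₁ * q₁ / (p₁ * q₁ + (1 - p₁) * q₀)
                  else p₁ * (1 - q₁) / (1 - (p₁ * q₁ + (1 - p₁) * q₀)))
                (h t₂)).map
              (fun t₁ => (t₁, t₂))) := by
  have hs1 := bernoulli_p2'_le_one p₁ q₀ q₁ hp₁ hq₀ hq₁
  have hc : p₁ * (1 - q₁) + (1 - p₁) * (1 - q₀) = 1 - (p₁ * q₁ + (1 - p₁) * q₀) :=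
    (ENNReal.one_sub_mul_add_mul hp₁ hq₀ hq₁).symm
  set s := p₁ * q₁ + (1 - p₁) * q₀ with hs
  have hsT : s ≠ ∞ := ne_top_of_le_ne_top ENNReal.one_ne_top hs1
  have hcT : 1 - s ≠ ∞ := ne_top_of_le_ne_top ENNReal.one_ne_top tsub_le_self
  have hc0 : 1 - s ≠ 0 := (tsub_pos_of_lt (lt_of_le_of_ne hs1 h1)).ne'
  have hpost : ∀ t₂ : Bool, (if t₂ then p₁ * q₁ / s else p₁ * (1 - q₁) / (1 - s)) ≤ 1 := by
    rintro (_ | _)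
    · exact ENNReal.div_le_of_le_mul (by rw [one_mul, ← hc]; exact le_self_add)
    · exact ENNReal.div_le_of_le_mul (by rw [one_mul, hs]; exact le_self_add)
  refine ⟨hpost, PMF.ext ?_⟩
  rintro ⟨t₁, t₂⟩
  rw [PMF.bind_map_pair_right_apply, PMF.bind_map_pair_left_apply]
  cases t₁ <;> cases t₂ <;> simp only [PMF.bernoulliENNReal_apply_true,
    PMF.bernoulliENNReal_apply_false, Bool.false_eq_true, if_true, if_false]
  · exact (ENNReal.mul_one_sub_div_of_add_eq hc hc0 hcT).symm
  · exact (ENNReal.mul_one_sub_div_of_add_eq hs.symm h0 hsT).symm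
  · exact (ENNReal.mul_div_cancel hc0 hcT).symm
  · exact (ENNReal.mul_div_cancel h0 hsT).symm
end

section
/- Beta–Bernoulli swap preserves the joint distribution (measure form): for all real a, b > 0, the joint measure on ℝ × Bool obtained by sampling θ from Beta(a, b) and then t from Bern(θ) equals the joint measure obtained by sampling t from Bern(a/(a+b)) and then θ from Beta(a + (if t then 1 else 0), b + (if t then 0 else 1)): (Beta(a, b)).bind (fun θ => Measure.map (fun t => (θ, t)) (Bern θ)) = (Bern (a/(a+b))).bind (fun t => Measure.map (fun θ => (θ, t)) (Beta (a + if t then 1 else 0) (b + if t then 0 else 1))). -/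
open MeasureTheory

/-- The Beta-function normalization constant `B(a, b)` (real powers, Lebesgue measure). -/
noncomputable def betaNorm (a b : ℝ) : ℝ :=
  ∫ x in Set.Ioo (0:ℝ) 1, x ^ (a - 1) * (1 - x) ^ (b - 1)

/-- The Beta measure `Beta(a, b)` on `ℝ`, given by its density with respect to Lebesgue
measure. -/
noncomputable def betaMeasure (a b : ℝ) : Measure ℝ :=
  volume.withDensity fun x =>
    ENNReal.ofReal
      (Set.indicator (Set.Ioo 0 1)
        (fun x => x ^ (a - 1) * (1 - x) ^ (b - 1) / betaNorm a b) x)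

/-- The Bernoulli measure `Bern(p)` on `Bool` with success probability `p`. -/
noncomputable def bernMeasure (p : ℝ) : Measure Bool :=
  ENNReal.ofReal p • Measure.dirac true + ENNReal.ofReal (1 - p) • Measure.dirac false

/-! Multiplying the `Beta(a, b)` density by `θ` (resp. `1 - θ`) gives `a / (a + b)` times the
`Beta(a + 1, b)` density (resp. `b / (a + b)` times the `Beta(a, b + 1)` density), because
`B(a + 1, b) = a / (a + b) * B(a, b)` by `Γ(s + 1) = s Γ(s)`. Hence both joint measures equal
`a / (a + b) • Beta(a + 1, b) ⊗ δ_true + b / (a + b) • Beta(a, b + 1) ⊗ δ_false`. -/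

open scoped ENNReal

namespace MeasureTheory.Measure

variable {α β : Type*} [MeasurableSpace α] [MeasurableSpace β]

lemma bind_add_right {μ : Measure α} {f g : α → Measure β} (hf : Measurable f)
    (hg : Measurable g) :
    μ.bind (fun x => f x + g x) = μ.bind f + μ.bind g := by
  ext s hs
  rw [add_apply, bind_apply (f := fun x => f x + g x) hs (hf.add hg).aemeasurable,
    bind_apply hs hf.aemeasurable, bind_apply hs hg.aemeasurable]
  exact lintegral_add_left ((measurable_coe hs).comp hf) _

lemma measurable_smul_dirac {f : α → ℝ≥0∞} {g : α → β} (hf : Measurable f) (hg : Measurable g) :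
    Measurable fun x => f x • dirac (g x) :=
  measurable_of_measurable_coe _ fun s hs => by
    simp only [smul_apply, dirac_apply' _ hs, smul_eq_mul]
    exact hf.mul ((measurable_const.indicator hs).comp hg)

lemma bind_smul_dirac (μ : Measure α) {f : α → ℝ≥0∞} {g : α → β} (hf : Measurable f)
    (hg : Measurable g) : μ.bind (fun x => f x • dirac (g x)) = (μ.withDensity f).map g := by
  ext s hs
  rw [bind_apply hs (measurable_smul_dirac hf hg).aemeasurable, map_apply hg hs,
    withDensity_apply _ (hg hs), ← lintegral_indicator (hg hs)]
  congr 1 with x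
  by_cases hx : g x ∈ s <;> simp [dirac_apply' _ hs, hx]

end MeasureTheory.Measure

section

variable {α β : Type*} [MeasurableSpace α] [MeasurableSpace β]

lemma bernMeasure_bind (p : ℝ) (κ : Bool → Measure β) :
    (bernMeasure p).bind κ = ENNReal.ofReal p • κ true + ENNReal.ofReal (1 - p) • κ false := by
  ext s hs
  rw [Measure.bind_apply hs measurable_from_top.aemeasurable]
  simp [bernMeasure, lintegral_add_measure, lintegral_smul_measure]

lemma bernMeasure_map_prodMk (x : α) (p : ℝ) :
    (bernMeasure p).map (fun t => (x, t)) =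
      ENNReal.ofReal p • Measure.dirac (x, true) +
        ENNReal.ofReal (1 - p) • Measure.dirac (x, false) := by
  rw [← Measure.bind_dirac_eq_map _ measurable_prodMk_left, bernMeasure_bind]

lemma bind_bernMeasure_map_prodMk (μ : Measure α) {p : α → ℝ} (hp : Measurable p) :
    μ.bind (fun x => (bernMeasure (p x)).map (fun t => (x, t))) =
      (μ.withDensity fun x => ENNReal.ofReal (p x)).map (fun x => (x, true)) +
        (μ.withDensity fun x => ENNReal.ofReal (1 - p x)).map (fun x => (x, false)) := by
  have hT : Measurable fun x => ENNReal.ofReal (p x) := hp.ennreal_ofReal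
  have hF : Measurable fun x => ENNReal.ofReal (1 - p x) :=
    (measurable_const.sub hp).ennreal_ofReal
  simp_rw [bernMeasure_map_prodMk]
  rw [Measure.bind_add_right (Measure.measurable_smul_dirac hT measurable_prodMk_right)
      (Measure.measurable_smul_dirac hF measurable_prodMk_right),
    Measure.bind_smul_dirac _ hT measurable_prodMk_right,
    Measure.bind_smul_dirac _ hF measurable_prodMk_right]

end

lemma betaNorm_eq_re_betaIntegral (a b : ℝ) : betaNorm a b = (Complex.betaIntegral a b).re := by
  have hcongr : Complex.betaIntegral a b =
      ∫ x in (0:ℝ)..1, ((x ^ (a - 1) * (1 - x) ^ (b - 1) : ℝ) : ℂ) := by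
    refine intervalIntegral.integral_congr fun x hx => ?_
    rw [Set.uIcc_of_le zero_le_one] at hx
    push_cast
    rw [Complex.ofReal_cpow hx.1, Complex.ofReal_cpow (sub_nonneg.2 hx.2)]
    push_cast
    ring_nf
  rw [hcongr, intervalIntegral.integral_ofReal, Complex.ofReal_re,
    intervalIntegral.integral_of_le zero_le_one, integral_Ioc_eq_integral_Ioo, betaNorm]

lemma betaNorm_eq_beta {a b : ℝ} (ha : 0 < a) (hb : 0 < b) :
    betaNorm a b = ProbabilityTheory.beta a b := by
  rw [betaNorm_eq_re_betaIntegral, ProbabilityTheory.beta_eq_betaIntegralReal a b ha hb]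

lemma betaNorm_pos {a b : ℝ} (ha : 0 < a) (hb : 0 < b) : 0 < betaNorm a b :=
  betaNorm_eq_beta ha hb ▸ ProbabilityTheory.beta_pos ha hb

lemma betaNorm_nonneg (a b : ℝ) : 0 ≤ betaNorm a b :=
  setIntegral_nonneg measurableSet_Ioo fun _ hx =>
    mul_nonneg (Real.rpow_nonneg hx.1.le _) (Real.rpow_nonneg (sub_nonneg.2 hx.2.le) _)

lemma betaNorm_add_one_left {a b : ℝ} (ha : 0 < a) (hb : 0 < b) :
    betaNorm (a + 1) b = a / (a + b) * betaNorm a b := by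
  rw [betaNorm_eq_beta (by linarith) hb, betaNorm_eq_beta ha hb, ProbabilityTheory.beta,
    ProbabilityTheory.beta, Real.Gamma_add_one ha.ne', add_right_comm,
    Real.Gamma_add_one (by linarith : a + b ≠ 0)]
  field_simp

lemma betaNorm_add_one_right {a b : ℝ} (ha : 0 < a) (hb : 0 < b) :
    betaNorm a (b + 1) = b / (a + b) * betaNorm a b := by
  rw [betaNorm_eq_beta ha (by linarith), betaNorm_eq_beta ha hb, ProbabilityTheory.beta,
    ProbabilityTheory.beta, Real.Gamma_add_one hb.ne', ← add_assoc,
    Real.Gamma_add_one (by linarith : a + b ≠ 0)]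
  field_simp

lemma measurable_betaDensity (a b : ℝ) :
    Measurable fun x => ENNReal.ofReal
      (Set.indicator (Set.Ioo 0 1) (fun x => x ^ (a - 1) * (1 - x) ^ (b - 1) / betaNorm a b) x) :=
  ((by fun_prop : Measurable fun x : ℝ => x ^ (a - 1) * (1 - x) ^ (b - 1) / betaNorm a b).indicator
    measurableSet_Ioo).ennreal_ofReal

lemma betaMeasure_withDensity_rpow_mul_rpow {a b c d : ℝ} (hac : 0 < a + c) (hbd : 0 < b + d) :
    (betaMeasure a b).withDensity (fun x => ENNReal.ofReal (x ^ c * (1 - x) ^ d)) =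
      ENNReal.ofReal (betaNorm (a + c) (b + d) / betaNorm a b) • betaMeasure (a + c) (b + d) := by
  rw [betaMeasure, betaMeasure, ← withDensity_mul _ (measurable_betaDensity a b) (by fun_prop),
    ← withDensity_smul _ (measurable_betaDensity _ _)]
  congr 1 with x
  by_cases hx : x ∈ Set.Ioo (0:ℝ) 1
  · have hx₀ : 0 < x := hx.1
    have hx₁ : 0 < 1 - x := sub_pos.2 hx.2
    have hB' := betaNorm_pos hac hbd
    simp only [Pi.mul_apply, Pi.smul_apply, Set.indicator_of_mem hx, smul_eq_mul]
    rw [← ENNReal.ofReal_mul (div_nonneg (by positivity) (betaNorm_nonneg a b)),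
      ← ENNReal.ofReal_mul (div_nonneg hB'.le (betaNorm_nonneg a b)),
      show a + c - 1 = (a - 1) + c by ring, show b + d - 1 = (b - 1) + d by ring,
      Real.rpow_add hx₀, Real.rpow_add hx₁]
    congr 1
    field_simp
  · simp [Set.indicator_of_notMem hx]

lemma betaMeasure_withDensity_ofReal {a b : ℝ} (ha : 0 < a) (hb : 0 < b) :
    (betaMeasure a b).withDensity (fun x => ENNReal.ofReal x) =
      ENNReal.ofReal (a / (a + b)) • betaMeasure (a + 1) b := by
  have h := betaMeasure_withDensity_rpow_mul_rpow
    (by linarith : 0 < a + 1) (by linarith : 0 < b + 0)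
  simp only [Real.rpow_one, Real.rpow_zero, mul_one, add_zero] at h
  rw [h, betaNorm_add_one_left ha hb, mul_div_cancel_right₀ _ (betaNorm_pos ha hb).ne']

lemma betaMeasure_withDensity_ofReal_one_sub {a b : ℝ} (ha : 0 < a) (hb : 0 < b) :
    (betaMeasure a b).withDensity (fun x => ENNReal.ofReal (1 - x)) =
      ENNReal.ofReal (b / (a + b)) • betaMeasure a (b + 1) := by
  have h := betaMeasure_withDensity_rpow_mul_rpow
    (by linarith : 0 < a + 0) (by linarith : 0 < b + 1)
  simp only [Real.rpow_one, Real.rpow_zero, one_mul, add_zero] at h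
  rw [h, betaNorm_add_one_right ha hb, mul_div_cancel_right₀ _ (betaNorm_pos ha hb).ne']

/-- Beta–Bernoulli swap preserves the joint distribution (measure form): sampling
`θ ~ Beta(a, b)` then `t ~ Bern(θ)` gives the same joint measure on `ℝ × Bool` as
sampling `t ~ Bern(a/(a+b))` then `θ ~ Beta(a + [t], b + [¬t])`. -/
theorem beta_bernoulli_swap_joint (a b : ℝ) (ha : 0 < a) (hb : 0 < b) :
    (betaMeasure a b).bind
        (fun θ => Measure.map (fun t => (θ, t)) (bernMeasure θ)) =
      (bernMeasure (a / (a + b))).bind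
        (fun t => Measure.map (fun θ => (θ, t))
          (betaMeasure (a + if t then 1 else 0) (b + if t then 0 else 1))) := by
  rw [bind_bernMeasure_map_prodMk (p := fun θ => θ) _ measurable_id, bernMeasure_bind,
    betaMeasure_withDensity_ofReal ha hb, betaMeasure_withDensity_ofReal_one_sub ha hb,
    Measure.map_smul, Measure.map_smul]
  simp only [if_true, if_false, add_zero, Bool.false_eq_true]
  rw [one_sub_div (by linarith : a + b ≠ 0), add_sub_cancel_left]
end

section
/- The Gaussian posterior kernel is the regular conditional distribution of the linear-Gaussian joint: let μ₀, b be reals, v₀, v positive reals, and a a nonzero real, and let ρ be the measure on ℝ × ℝ given by ρ := (gaussianReal μ₀ v₀).bind (fun x => Measure.map (fun y => (y, x)) (gaussianReal (a*x + b) v)) (first coordinate the observation y, second the latent x). Set w := (1/(a^2*v₀) + 1/v)⁻¹ and m(y) := ((a*μ₀ + b)/(a^2*v₀) + y/v) * w. Then (i) the first marginal satisfies ρ.fst = gaussianReal (a*μ₀ + b) (a^2*v₀ + v), and (ii) for ρ.fst-almost every y, the disintegration kernel satisfies ρ.condKernel y = gaussianReal ((m(y) - b)/a) (w/a^2). -/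
open MeasureTheory ProbabilityTheory Real
open scoped NNReal ENNReal

/-! Bayes' rule at the level of densities. Completing the square in `x` factors the joint density
`N(x; μ₀, v₀) · N(y; a x + b, v)` as `N(y; a μ₀ + b, a² v₀ + v) · N(x; (m y - b) / a, w / a²)`,
i.e. as the density of the marginal of `y` times the posterior density of `x`. Hence `ρ`, the
swap of `N(μ₀, v₀) ⊗ₘ N(a · + b, v)`, equals `N(a μ₀ + b, a² v₀ + v) ⊗ₘ N((m · - b) / a, w / a²)`,
and uniqueness of the disintegration identifies the second factor with `ρ.condKernel`. -/

namespace MeasureTheory.Measure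

variable {α β : Type*} {mα : MeasurableSpace α} {mβ : MeasurableSpace β}

lemma map_withDensity_comp {μ : Measure α} {g : α → β} {f : β → ℝ≥0∞}
    (hg : Measurable g) (hf : Measurable f) :
    (μ.withDensity (f ∘ g)).map g = (μ.map g).withDensity f := by
  ext s hs
  rw [map_apply hg hs, withDensity_apply _ (hg hs), withDensity_apply _ hs,
    setLIntegral_map hs hf hg]
  rfl

lemma map_swap_compProd (μ : Measure α) [SFinite μ] (κ : Kernel α β) [IsSFiniteKernel κ] :
    (μ ⊗ₘ κ).map Prod.swap = μ.bind fun x => (κ x).map fun y => (y, x) := by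
  rw [compProd_eq_comp_prod, map_comp _ _ measurable_swap, Kernel.map_prod_swap]
  congr 1 with x : 1
  rw [Kernel.prod_apply, Kernel.id_apply, prod_dirac]

lemma withDensity_compProd_eq_withDensity_prod {μ : Measure α} {ν : Measure β} [SFinite μ]
    [SFinite ν] {κ : Kernel α β} [IsSFiniteKernel κ] {f : α → ℝ≥0∞} {g : α → β → ℝ≥0∞}
    (hf : Measurable f) (hg : Measurable (Function.uncurry g))
    (hκ : ∀ x, κ x = ν.withDensity (g x)) :
    μ.withDensity f ⊗ₘ κ = (μ.prod ν).withDensity fun p => f p.1 * g p.1 p.2 := by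
  have hκ_eq : κ = (Kernel.const α ν).withDensity g := by
    ext1 x
    rw [Kernel.withDensity_apply _ hg, Kernel.const_apply, hκ]
  have : IsSFiniteKernel ((Kernel.const α ν).withDensity g) := hκ_eq ▸ inferInstance
  rw [hκ_eq, compProd_withDensity hg, compProd_const, prod_withDensity_left hf]
  exact (withDensity_mul _ (hf.comp measurable_fst) hg).symm

end MeasureTheory.Measure

namespace ProbabilityTheory

variable {α : Type*} {mα : MeasurableSpace α}

noncomputable def gaussianKernel (m : α → ℝ) (hm : Measurable m) (v : ℝ≥0) : Kernel α ℝ where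
  toFun x := gaussianReal (m x) v
  measurable' := measurable_gaussianReal.comp (hm.prodMk measurable_const)

@[simp]
lemma gaussianKernel_apply {m : α → ℝ} (hm : Measurable m) (v : ℝ≥0) (x : α) :
    gaussianKernel m hm v x = gaussianReal (m x) v := rfl

instance {m : α → ℝ} (hm : Measurable m) (v : ℝ≥0) : IsMarkovKernel (gaussianKernel m hm v) :=
  ⟨fun x => by rw [gaussianKernel_apply]; infer_instance⟩

lemma gaussianReal_compProd_gaussianKernel (μ : ℝ) {v₀ v : ℝ≥0} (hv₀ : v₀ ≠ 0) (hv : v ≠ 0)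
    {m : ℝ → ℝ} (hm : Measurable m) :
    gaussianReal μ v₀ ⊗ₘ gaussianKernel m hm v
      = volume.withDensity fun p => gaussianPDF μ v₀ p.1 * gaussianPDF (m p.1) v p.2 := by
  have hpdf : Measurable fun p : ℝ × ℝ => gaussianPDF (m p.1) v p.2 := by fun_prop
  rw [gaussianReal_of_var_ne_zero _ hv₀, Measure.volume_eq_prod]
  exact Measure.withDensity_compProd_eq_withDensity_prod (g := fun x => gaussianPDF (m x) v)
    (measurable_gaussianPDF _ _) hpdf fun x => gaussianReal_of_var_ne_zero _ hv

lemma gaussianPDFReal_mul_gaussianPDFReal_affine (μ₀ b : ℝ) {a : ℝ} (ha : a ≠ 0) {v₀ v : ℝ≥0}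
    (hv₀ : v₀ ≠ 0) (hv : v ≠ 0) (x y : ℝ) :
    gaussianPDFReal μ₀ v₀ x * gaussianPDFReal (a * x + b) v y =
      gaussianPDFReal (a * μ₀ + b) ((a ^ 2).toNNReal * v₀ + v) y *
        gaussianPDFReal
          ((((a * μ₀ + b) / (a ^ 2 * v₀) + y / v) * (1 / (a ^ 2 * v₀) + 1 / v)⁻¹ - b) / a)
          ((1 / (a ^ 2 * v₀) + 1 / v)⁻¹ / a ^ 2).toNNReal x := by
  have hv₀' : (0 : ℝ) < v₀ := by positivity
  have hv' : (0 : ℝ) < v := by positivity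
  have hw : 0 ≤ (1 / (a ^ 2 * v₀) + 1 / v)⁻¹ / a ^ 2 := by positivity
  simp only [gaussianPDFReal, NNReal.coe_add, NNReal.coe_mul, Real.coe_toNNReal _ (sq_nonneg a),
    Real.coe_toNNReal _ hw]
  rw [mul_mul_mul_comm, mul_mul_mul_comm (√(2 * π * (a ^ 2 * v₀ + v)))⁻¹]
  congr 1
  · rw [← mul_inv, ← Real.sqrt_mul (by positivity), ← mul_inv, ← Real.sqrt_mul (by positivity)]
    congr 2
    field_simp
    ring
  · rw [← Real.exp_add, ← Real.exp_add]
    congr 1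
    field_simp
    ring

lemma gaussianPDF_mul_gaussianPDF_affine (μ₀ b : ℝ) {a : ℝ} (ha : a ≠ 0) {v₀ v : ℝ≥0}
    (hv₀ : v₀ ≠ 0) (hv : v ≠ 0) (x y : ℝ) :
    gaussianPDF μ₀ v₀ x * gaussianPDF (a * x + b) v y =
      gaussianPDF (a * μ₀ + b) ((a ^ 2).toNNReal * v₀ + v) y *
        gaussianPDF
          ((((a * μ₀ + b) / (a ^ 2 * v₀) + y / v) * (1 / (a ^ 2 * v₀) + 1 / v)⁻¹ - b) / a)
          ((1 / (a ^ 2 * v₀) + 1 / v)⁻¹ / a ^ 2).toNNReal x := by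
  simp only [gaussianPDF, ← ENNReal.ofReal_mul (gaussianPDFReal_nonneg _ _ _),
    gaussianPDFReal_mul_gaussianPDFReal_affine μ₀ b ha hv₀ hv]

end ProbabilityTheory

/-- The Gaussian posterior kernel is the regular conditional distribution of the
linear-Gaussian joint: for `ρ` the joint measure of `(y, x)` with `x ~ N(μ₀, v₀)` and
`y | x ~ N(a*x + b, v)`, the first marginal of `ρ` is `N(a*μ₀ + b, a^2*v₀ + v)`, and for
`ρ.fst`-almost every `y` the disintegration kernel is `N((m y - b)/a, w/a^2)`, where
`w = (1/(a^2*v₀) + 1/v)⁻¹` and `m y = ((a*μ₀ + b)/(a^2*v₀) + y/v) * w`. -/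
theorem gaussian_posterior_is_condKernel (μ₀ b : ℝ) (v₀ v : ℝ≥0)
    (hv₀ : 0 < v₀) (hv : 0 < v) (a : ℝ) (ha : a ≠ 0)
    (ρ : Measure (ℝ × ℝ)) [IsFiniteMeasure ρ]
    (hρ : ρ = (gaussianReal μ₀ v₀).bind
      (fun x => Measure.map (fun y => (y, x)) (gaussianReal (a * x + b) v))) :
    ρ.fst = gaussianReal (a * μ₀ + b) ((a ^ 2).toNNReal * v₀ + v) ∧
      ∀ᵐ y ∂ρ.fst,
        ρ.condKernel y =
          gaussianReal
            ((((a * μ₀ + b) / (a ^ 2 * (v₀ : ℝ)) + y / (v : ℝ)) *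
                (1 / (a ^ 2 * (v₀ : ℝ)) + 1 / (v : ℝ))⁻¹ - b) / a)
            (((1 / (a ^ 2 * (v₀ : ℝ)) + 1 / (v : ℝ))⁻¹ / a ^ 2).toNNReal) := by
  set w := (1 / (a ^ 2 * (v₀ : ℝ)) + 1 / (v : ℝ))⁻¹
  set m : ℝ → ℝ := fun y => (((a * μ₀ + b) / (a ^ 2 * (v₀ : ℝ)) + y / (v : ℝ)) * w - b) / a
  set V := (a ^ 2).toNNReal * v₀ + v
  set W := (w / a ^ 2).toNNReal
  have hm : Measurable m := by fun_prop
  have hV : V ≠ 0 := (add_pos_of_nonneg_of_pos zero_le hv).ne'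
  have hW : W ≠ 0 := by
    simp only [W, ne_eq, Real.toNNReal_eq_zero, not_le, w]
    positivity
  have hjoint : ρ = gaussianReal (a * μ₀ + b) V ⊗ₘ gaussianKernel m hm W := by
    calc ρ = (gaussianReal μ₀ v₀ ⊗ₘ gaussianKernel (fun x => a * x + b) (by fun_prop) v).map
          Prod.swap := by rw [hρ, Measure.map_swap_compProd]; rfl
      _ = (volume.withDensity ((fun p => gaussianPDF (a * μ₀ + b) V p.1 *
            gaussianPDF (m p.1) W p.2) ∘ Prod.swap)).map Prod.swap := by
          rw [gaussianReal_compProd_gaussianKernel _ hv₀.ne' hv.ne']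
          congr with p
          exact gaussianPDF_mul_gaussianPDF_affine μ₀ b ha hv₀.ne' hv.ne' p.1 p.2
      _ = _ := by
          rw [Measure.map_withDensity_comp measurable_swap (by fun_prop), Measure.volume_eq_prod,
            Measure.prod_swap, ← Measure.volume_eq_prod,
            gaussianReal_compProd_gaussianKernel _ hV hW]
  have hfst : ρ.fst = gaussianReal (a * μ₀ + b) V := by rw [hjoint, Measure.fst_compProd]
  refine ⟨hfst, ?_⟩
  filter_upwards [eq_condKernel_of_measure_eq_compProd _ (hfst ▸ hjoint)] with y hy
  exact hy.symm
end
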